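/- arXiv:2007.14193 — 6 statements merged into one kernel-verified Lean document; each statement's English description precedes it below -/
import Mathlib

section
/- Let θ ∈ (π/2, π) satisfy cos θ / sin θ > −2/π (i.e. θ < arccot(−2/π)). Then for every τ > 0, every κ ∈ (0, π/(τ sin θ)], and every z ∈ Γ^τ_{θ,κ}, the complex number δ_τ(e^{−zτ}) = (1 − e^{−zτ})/τ is nonzero and satisfies |arg δ_τ(e^{−zτ})| ≤ θ; that is, δ_τ(e^{−zτ}) ∈ Σ_θ. -/
/-!
On the contour, `ζ = zτ` lies in the sector `|arg ζ| ≤ θ` with `|ζ| sin θ ≤ π`. Writing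
`ζ = a + ib`, the sector condition for `1 - e^{-ζ}` becomes, after multiplying by `eᵃ`,
`sin θ cos b + cos θ |sin b| ≤ eᵃ sin θ`. For `|b| ≤ π` the left side is `sin (θ + |b|)`, and the
concavity-type estimate `sin (θ + s) ≤ sin θ + s cos θ` on `[0, π]` (this is where
`cot θ ≥ -2/π` enters, through `2 (s - sin s) ≤ π (1 - cos s)`) together with
`|b| cos θ ≤ a sin θ` and `1 + a ≤ eᵃ` closes it. For `π < |b|` the left side is
`sin (θ - |b|) ≤ 0`, since `|b| ≤ π / sin θ < θ + π`. The same bound `|ζ| < 2π` shows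
`e^{-ζ} ≠ 1`.
-/

open Real Complex Set

/-- The truncated contour `Γ^τ_{θ,κ}`: points with `κ ≤ |z| ≤ π/(τ sin θ)` on the
two rays `|arg z| = θ`, together with the arc `|z| = κ`, `|arg z| ≤ θ`. -/
def GammaTau (θ κ τ : ℝ) : Set ℂ :=
  {z : ℂ | (κ ≤ ‖z‖ ∧ ‖z‖ ≤ Real.pi / (τ * Real.sin θ) ∧ |z.arg| = θ) ∨
    (‖z‖ = κ ∧ |z.arg| ≤ θ)}

namespace Real

lemma abs_sin_abs (x : ℝ) : |sin (|x|)| = |sin x| := by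
  rcases abs_choice x with h | h <;> simp [h]

lemma mul_pi_sub_le_pi_mul_sin {t : ℝ} (ht₀ : 0 ≤ t) (htπ : t ≤ π) :
    t * (π - t) ≤ π * sin t := by
  -- both sides are invariant under `t ↦ π - t`
  wlog ht : t ≤ π / 2 generalizing t
  · simpa [sin_pi_sub, mul_comm] using this (t := π - t) (by linarith) (by linarith) (by linarith)
  have hcube := sin_ge_sub_cube ht₀
  have hπt : π * t ≤ 6 := by nlinarith [pi_lt_d2, pi_pos]
  nlinarith [mul_nonneg (mul_nonneg ht₀ ht₀) (sub_nonneg.2 hπt)]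

lemma two_mul_sub_sin_le_pi_mul_one_sub_cos {s : ℝ} (hs₀ : 0 ≤ s) (hsπ : s ≤ π) :
    2 * (s - sin s) ≤ π * (1 - cos s) := by
  have hcos := cos_le_one_sub_mul_cos_sq (x := s) (by rwa [abs_of_nonneg hs₀])
  have hsin := mul_pi_sub_le_pi_mul_sin hs₀ hsπ
  have hπ := pi_pos
  have hmul : π * (2 * (s - sin s)) ≤ π * (π * (1 - cos s)) := by
    have h2 : π ^ 2 * (2 / π ^ 2 * s ^ 2) = 2 * s ^ 2 := by field_simp
    nlinarith
  exact le_of_mul_le_mul_left hmul hπ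

lemma sin_add_le_sin_add_mul_cos {θ s : ℝ} (hsin : 0 ≤ sin θ) (hcot : -2 * sin θ ≤ π * cos θ)
    (hs₀ : 0 ≤ s) (hsπ : s ≤ π) : sin (θ + s) ≤ sin θ + s * cos θ := by
  have hkey := two_mul_sub_sin_le_pi_mul_one_sub_cos hs₀ hsπ
  have hsub : 0 ≤ s - sin s := by linarith [sin_le hs₀]
  have hπmul : 0 ≤ π * (sin θ * (1 - cos s) + cos θ * (s - sin s)) := by
    nlinarith [mul_le_mul_of_nonneg_left hkey hsin,
      mul_nonneg (by linarith : 0 ≤ 2 * sin θ + π * cos θ) hsub]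
  have hdefect := nonneg_of_mul_nonneg_right hπmul pi_pos
  rw [sin_add]
  nlinarith

lemma sin_mul_cos_add_cos_mul_abs_sin_le {θ a s : ℝ} (hsin : 0 ≤ sin θ)
    (hcot : -2 * sin θ ≤ π * cos θ) (hθπ : θ ≤ π) (hs₀ : 0 ≤ s) (hsθ : s ≤ θ + π)
    (ha : s * cos θ ≤ a * sin θ) : sin θ * cos s + cos θ * |sin s| ≤ exp a * sin θ := by
  rcases le_total s π with hsπ | hπs
  · rw [abs_of_nonneg (sin_nonneg_of_nonneg_of_le_pi hs₀ hsπ), ← sin_add]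
    calc sin (θ + s) ≤ sin θ + s * cos θ := sin_add_le_sin_add_mul_cos hsin hcot hs₀ hsπ
      _ ≤ (a + 1) * sin θ := by linarith
      _ ≤ exp a * sin θ := by gcongr; exact add_one_le_exp a
  · have hsin_s : sin s ≤ 0 := by
      simpa [sin_sub_pi] using
        sin_nonneg_of_nonneg_of_le_pi (x := s - π) (by linarith) (by linarith)
    rw [abs_of_nonpos hsin_s, mul_neg, ← sub_eq_add_neg, ← sin_sub]
    calc sin (θ - s) ≤ 0 := sin_nonpos_of_nonpos_of_neg_pi_le (by linarith) (by linarith)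
      _ ≤ exp a * sin θ := by positivity

lemma two_div_three_lt_sin {θ : ℝ} (hcos : cos θ < 0) (hcot : -2 * sin θ ≤ π * cos θ) :
    2 / 3 < sin θ := by
  have hsin : 0 < sin θ := by nlinarith [pi_pos]
  have h3 : -cos θ * 3 < 2 * sin θ := by nlinarith [pi_gt_three]
  nlinarith [sin_sq_add_cos_sq θ]

end Real

namespace Complex

lemma abs_arg_le_iff {θ : ℝ} (hθ₀ : 0 < θ) (hθπ : θ ≤ π) (w : ℂ) :
    |arg w| ≤ θ ↔ Real.cos θ * |w.im| ≤ Real.sin θ * w.re := by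
  rcases eq_or_ne w 0 with rfl | hw
  · simp [hθ₀.le]
  have hα := abs_arg_le_pi w
  -- the right-hand side says `0 ≤ ‖w‖ sin (θ - |arg w|)`
  rw [← norm_mul_cos_arg, ← norm_mul_sin_arg, abs_mul, abs_norm,
    abs_sin_eq_sin_abs_of_abs_le_pi hα, ← Real.cos_abs (arg w), mul_left_comm,
    mul_left_comm (Real.sin θ), mul_le_mul_iff_right₀ (norm_pos_iff.2 hw),
    ← sub_nonneg (a := Real.sin θ * _), ← Real.sin_sub]
  constructor
  · intro h
    exact sin_nonneg_of_nonneg_of_le_pi (by linarith) (by linarith [abs_nonneg (arg w)])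
  · intro h
    by_contra! hlt
    exact (sin_neg_of_neg_of_neg_pi_lt (by linarith) (by linarith)).not_ge h

lemma one_sub_exp_neg_ne_zero {ζ : ℂ} (hζ₀ : ζ ≠ 0) (hζ : ‖ζ‖ < 2 * π) : 1 - exp (-ζ) ≠ 0 := by
  rw [sub_ne_zero, ne_comm, Ne, exp_eq_one_iff]
  rintro ⟨n, hn⟩
  have hn₀ : n ≠ 0 := by rintro rfl; simp_all
  have hnorm : ‖ζ‖ = |(n : ℝ)| * (2 * π) := by
    rw [← norm_neg, hn, norm_mul, norm_intCast, norm_mul, norm_I]; simp [abs_of_pos pi_pos]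
  have hn₁ : (1 : ℝ) ≤ |(n : ℝ)| := by exact_mod_cast Int.one_le_abs hn₀
  nlinarith [pi_pos]

lemma abs_arg_one_sub_exp_neg_le {θ : ℝ} (hθ : π / 2 < θ) (hθπ : θ < π)
    (hcot : -2 * Real.sin θ ≤ π * Real.cos θ) {ζ : ℂ} (hζ : |arg ζ| ≤ θ)
    (hζπ : ‖ζ‖ * Real.sin θ ≤ π) : |arg (1 - exp (-ζ))| ≤ θ := by
  have hcos : Real.cos θ < 0 := cos_neg_of_pi_div_two_lt_of_lt hθ (by linarith)
  have hsin := two_div_three_lt_sin hcos hcot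
  rw [abs_arg_le_iff (by linarith) hθπ.le] at hζ ⊢
  have hre : (1 - exp (-ζ)).re = 1 - Real.exp (-ζ.re) * Real.cos ζ.im := by
    simp [exp_re]
  have him : (1 - exp (-ζ)).im = Real.exp (-ζ.re) * Real.sin ζ.im := by
    simp [exp_im]
  have hb : |ζ.im| ≤ θ + π := by
    nlinarith [abs_im_le_norm ζ]
  have key : Real.sin θ * Real.cos ζ.im + Real.cos θ * |Real.sin ζ.im|
      ≤ Real.exp ζ.re * Real.sin θ := by
    have h := sin_mul_cos_add_cos_mul_abs_sin_le (a := ζ.re) (by linarith) hcot hθπ.le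
      (abs_nonneg ζ.im) hb (by linarith)
    rwa [Real.cos_abs, Real.abs_sin_abs] at h
  rw [hre, him, abs_mul, abs_of_pos (Real.exp_pos _)]
  have hscaled := mul_le_mul_of_nonneg_left key (Real.exp_pos (-ζ.re)).le
  rw [← mul_assoc, ← Real.exp_add, neg_add_cancel, Real.exp_zero, one_mul] at hscaled
  linarith

lemma one_sub_exp_neg_mem_sector {θ : ℝ} (hθ : π / 2 < θ) (hθπ : θ < π)
    (hcot : -2 * Real.sin θ ≤ π * Real.cos θ) {ζ : ℂ} (hζ₀ : ζ ≠ 0) (hζ : |arg ζ| ≤ θ)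
    (hζπ : ‖ζ‖ * Real.sin θ ≤ π) : 1 - exp (-ζ) ≠ 0 ∧ |arg (1 - exp (-ζ))| ≤ θ := by
  have hsin := two_div_three_lt_sin (cos_neg_of_pi_div_two_lt_of_lt hθ (by linarith)) hcot
  refine ⟨one_sub_exp_neg_ne_zero hζ₀ ?_, abs_arg_one_sub_exp_neg_le hθ hθπ hcot hζ hζπ⟩
  nlinarith [pi_pos]

end Complex

lemma GammaTau_subset {θ κ τ : ℝ} (hκ : κ ≤ π / (τ * Real.sin θ)) :
    GammaTau θ κ τ ⊆ {z | κ ≤ ‖z‖ ∧ ‖z‖ ≤ π / (τ * Real.sin θ) ∧ |arg z| ≤ θ} := by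
  rintro z (⟨hκz, hzπ, harg⟩ | ⟨rfl, harg⟩)
  · exact ⟨hκz, hzπ, harg.le⟩
  · exact ⟨le_rfl, hκ, harg⟩

/-- For `θ ∈ (π/2, arccot(−2/π))`, on the truncated contour `Γ^τ_{θ,κ}` the quantity
`δ_τ(e^{−zτ}) = (1 − e^{−zτ})/τ` lies in the sector `Σ_θ = {w ≠ 0 : |arg w| ≤ θ}`. -/
theorem delta_mem_sector
    (θ : ℝ) (hθ1 : Real.pi / 2 < θ) (hθ2 : θ < Real.pi)
    (hθ3 : Real.cos θ / Real.sin θ > -2 / Real.pi) :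
    ∀ τ : ℝ, 0 < τ → ∀ κ : ℝ, 0 < κ → κ ≤ Real.pi / (τ * Real.sin θ) →
    ∀ z ∈ GammaTau θ κ τ,
      (1 - Complex.exp (-(z * τ))) / τ ≠ 0 ∧
      |((1 - Complex.exp (-(z * τ))) / τ).arg| ≤ θ := by
  intro τ hτ κ hκ hκle z hz
  have hsin : 0 < Real.sin θ := sin_pos_of_pos_of_lt_pi (by linarith) hθ2
  have hcot : -2 * Real.sin θ ≤ π * Real.cos θ := by
    rw [gt_iff_lt, div_lt_div_iff₀ pi_pos hsin] at hθ3
    linarith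
  obtain ⟨hκz, hzπ, harg⟩ := GammaTau_subset hκle hz
  have hζ₀ : z * τ ≠ 0 := mul_ne_zero (norm_pos_iff.1 (hκ.trans_le hκz)) (ofReal_ne_zero.2 hτ.ne')
  have hζπ : ‖z * τ‖ * Real.sin θ ≤ π := by
    rw [le_div_iff₀ (mul_pos hτ hsin)] at hzπ
    rw [norm_mul, norm_real, Real.norm_of_nonneg hτ.le]
    linarith
  obtain ⟨hne, hle⟩ := one_sub_exp_neg_mem_sector hθ1 hθ2 hcot hζ₀ (by rwa [arg_mul_real hτ]) hζπ
  refine ⟨div_ne_zero hne (ofReal_ne_zero.2 hτ.ne'), ?_⟩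
  rwa [div_eq_mul_inv, ← ofReal_inv, arg_mul_real (inv_pos.2 hτ)]
end

section
/- Let θ ∈ (π/2, π) satisfy cos θ / sin θ > −2/π. Then there exist constants C₀, C₁ > 0, depending only on θ, such that for every τ > 0, every κ ∈ (0, π/(τ sin θ)], and every z ∈ Γ^τ_{θ,κ}: C₀ |z| ≤ |(1 − e^{−zτ})/τ| ≤ C₁ |z|. -/
open Real Complex Set

/-!
On the contour `‖z τ‖ ≤ π / sin θ`, and the hypothesis on `cot θ` forces `sin θ > 1/2`, so
`w = z τ` stays in a closed disc of radius `R < 2π`. There `1 - e^{-w}` vanishes only at `w = 0`,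
where it vanishes to first order, so `(1 - e^{-w}) / w` (continued by `1` at `0`) is continuous and
nonvanishing on the compact disc, hence bounded above and away from `0`.
-/

theorem IsCompact.exists_pos_le_norm {X E : Type*} [TopologicalSpace X] [NormedAddCommGroup E]
    {K : Set X} (hK : IsCompact K) {g : X → E} (hg : ContinuousOn g K)
    (hg0 : ∀ x ∈ K, g x ≠ 0) : ∃ c > 0, ∀ x ∈ K, c ≤ ‖g x‖ := by
  rcases K.eq_empty_or_nonempty with rfl | hne
  · exact ⟨1, one_pos, by simp⟩
  obtain ⟨x₀, hx₀, hmin⟩ := hK.exists_isMinOn hne hg.norm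
  exact ⟨‖g x₀‖, norm_pos_iff.2 (hg0 x₀ hx₀), fun x hx => hmin hx⟩

theorem Complex.exp_ne_one_of_norm_lt {w : ℂ} (hw : w ≠ 0) (hwR : ‖w‖ < 2 * π) :
    exp w ≠ 1 := by
  intro h
  obtain ⟨n, rfl⟩ := exp_eq_one_iff.1 h
  have hn : n ≠ 0 := by rintro rfl; simp at hw
  have hn1 : (1 : ℝ) ≤ |(n : ℝ)| := by exact_mod_cast Int.one_le_abs hn
  have hnorm : ‖(n : ℂ) * (2 * π * I)‖ = |(n : ℝ)| * (2 * π) := by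
    simp [abs_of_pos pi_pos]
  nlinarith [pi_pos]

theorem exists_norm_one_sub_exp_neg_bounds {R : ℝ} (hR : R < 2 * π) :
    ∃ c > 0, ∃ C > 0, ∀ w : ℂ, ‖w‖ ≤ R →
      c * ‖w‖ ≤ ‖1 - exp (-w)‖ ∧ ‖1 - exp (-w)‖ ≤ C * ‖w‖ := by
  set f : ℂ → ℂ := fun w => 1 - exp (-w)
  have hf : Differentiable ℂ f := by fun_prop
  have hg : ContinuousOn (dslope f 0) (Metric.closedBall 0 R) :=
    ((continuousOn_dslope Filter.univ_mem).2 ⟨hf.continuous.continuousOn, hf 0⟩).mono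
      (subset_univ _)
  have hfg : ∀ w, f w = w * dslope f 0 w := fun w => by
    simpa [f] using (sub_smul_dslope f 0 w).symm
  have hg0 : ∀ w ∈ Metric.closedBall (0 : ℂ) R, dslope f 0 w ≠ 0 := by
    intro w hw hgw
    rcases eq_or_ne w 0 with rfl | hw0
    · have hderiv : HasDerivAt f 1 0 := by
        simpa using ((hasDerivAt_id (0 : ℂ)).neg.cexp).const_sub 1
      simp [dslope_same, hderiv.deriv] at hgw
    · have hwR : ‖-w‖ < 2 * π := by
        rw [norm_neg]; exact (mem_closedBall_zero_iff.1 hw).trans_lt hR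
      refine exp_ne_one_of_norm_lt (neg_ne_zero.2 hw0) hwR ?_
      have hfw : f w = 0 := by rw [hfg, hgw, mul_zero]
      exact (sub_eq_zero.1 hfw).symm
  obtain ⟨c, hc, hlow⟩ := (isCompact_closedBall 0 R).exists_pos_le_norm hg hg0
  obtain ⟨C, hup⟩ := (isCompact_closedBall 0 R).exists_bound_of_continuousOn hg
  refine ⟨c, hc, max C 1, by positivity, fun w hw => ?_⟩
  have hwB : w ∈ Metric.closedBall (0 : ℂ) R := mem_closedBall_zero_iff.2 hw
  change c * ‖w‖ ≤ ‖f w‖ ∧ ‖f w‖ ≤ max C 1 * ‖w‖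
  rw [hfg, norm_mul, mul_comm c, mul_comm (max C 1)]
  exact ⟨by gcongr; exact hlow w hwB,
    by gcongr; exact (hup w hwB).trans (le_max_left _ _)⟩

theorem one_half_lt_sin_of_cot_gt {θ : ℝ} (hθ1 : π / 2 < θ) (hθ2 : θ < π)
    (hcot : Real.cos θ / Real.sin θ > -2 / π) : 1 / 2 < Real.sin θ := by
  have hsin : 0 < Real.sin θ := Real.sin_pos_of_pos_of_lt_pi (by linarith [pi_pos]) hθ2
  have hcos : Real.cos θ < 0 := Real.cos_neg_of_pi_div_two_lt_of_lt hθ1 (by linarith)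
  have hπcos : -2 * Real.sin θ < π * Real.cos θ := by
    rw [gt_iff_lt, div_lt_div_iff₀ pi_pos hsin] at hcot; linarith
  -- with `π > 3` this gives `2 sin θ > 3 |cos θ|`, hence `13 sin² θ > 9`
  have h3cos : -2 * Real.sin θ < 3 * Real.cos θ := by nlinarith [pi_gt_three]
  nlinarith [Real.sin_sq_add_cos_sq θ]

theorem norm_le_of_mem_gammaTau {θ κ τ : ℝ} {z : ℂ} (hz : z ∈ GammaTau θ κ τ)
    (hκ : κ ≤ π / (τ * Real.sin θ)) : ‖z‖ ≤ π / (τ * Real.sin θ) := by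
  rcases hz with ⟨-, h, -⟩ | ⟨h, -⟩
  exacts [h, h ▸ hκ]

/-- Two-sided bound `C₀|z| ≤ |δ_τ(e^{−zτ})| ≤ C₁|z|` on the truncated contour. -/
theorem delta_two_sided_bound
    (θ : ℝ) (hθ1 : Real.pi / 2 < θ) (hθ2 : θ < Real.pi)
    (hθ3 : Real.cos θ / Real.sin θ > -2 / Real.pi) :
    ∃ C₀ > (0 : ℝ), ∃ C₁ > (0 : ℝ),
      ∀ τ : ℝ, 0 < τ → ∀ κ : ℝ, 0 < κ → κ ≤ Real.pi / (τ * Real.sin θ) →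
      ∀ z ∈ GammaTau θ κ τ,
        C₀ * ‖z‖ ≤ ‖(1 - Complex.exp (-(z * τ))) / τ‖ ∧
        ‖(1 - Complex.exp (-(z * τ))) / τ‖ ≤ C₁ * ‖z‖ := by
  have hsin := one_half_lt_sin_of_cot_gt hθ1 hθ2 hθ3
  have hR : π / Real.sin θ < 2 * π := (div_lt_iff₀ (by linarith)).2 (by nlinarith [pi_pos])
  obtain ⟨c, hc, C, hC, hbound⟩ := exists_norm_one_sub_exp_neg_bounds hR
  refine ⟨c, hc, C, hC, fun τ hτ κ _ hκ z hz => ?_⟩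
  have hzτ : ‖z * τ‖ = ‖z‖ * τ := by simp [abs_of_pos hτ]
  have hzτR : ‖z * τ‖ ≤ π / Real.sin θ := by
    rw [hzτ, ← le_div_iff₀ hτ, div_div, mul_comm (Real.sin θ)]
    exact norm_le_of_mem_gammaTau hz hκ
  rw [norm_div, Complex.norm_real, Real.norm_of_nonneg hτ.le, le_div_iff₀ hτ, div_le_iff₀ hτ,
    mul_assoc, mul_assoc, ← hzτ]
  exact hbound _ hzτR
end

section
/- Let θ ∈ (π/2, π) satisfy cos θ / sin θ > −2/π. Then there exists a constant C > 0, depending only on θ, such that for every τ > 0, every κ ∈ (0, π/(τ sin θ)], and every z ∈ Γ^τ_{θ,κ}: |(1 − e^{−zτ})/τ − z| ≤ C τ |z|². -/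
open Real Complex Set

/-!
With `w = -zτ` the error is `-(e^w - 1 - w)/τ`, and the Taylor remainder satisfies
`|e^w - 1 - w| ≤ |w|² e^{|w|}`. On the contour `τ|z| ≤ π / sin θ`, so `C = e^{π / sin θ}` works.
-/

lemma Complex.norm_exp_sub_one_sub_id_le_sq_mul_exp (w : ℂ) :
    ‖exp w - 1 - w‖ ≤ ‖w‖ ^ 2 * Real.exp ‖w‖ := by
  simpa [Finset.sum_range_succ, sub_sub] using Complex.norm_exp_sub_sum_le_norm_mul_exp w 2

lemma norm_one_sub_exp_neg_mul_div_sub_le (z : ℂ) {τ : ℝ} (hτ : 0 < τ) :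
    ‖(1 - exp (-(z * τ))) / τ - z‖ ≤ τ * ‖z‖ ^ 2 * Real.exp (τ * ‖z‖) := by
  have hτ0 : (τ : ℂ) ≠ 0 := by exact_mod_cast hτ.ne'
  have hnorm : ‖-(z * τ)‖ = τ * ‖z‖ := by
    rw [norm_neg, norm_mul, Complex.norm_real, Real.norm_of_nonneg hτ.le, mul_comm]
  have hrw : (1 - exp (-(z * τ))) / τ - z = -((exp (-(z * τ)) - 1 - -(z * τ)) / τ) := by
    field_simp
    ring
  rw [hrw, norm_neg, norm_div, Complex.norm_real, Real.norm_of_nonneg hτ.le, div_le_iff₀ hτ]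
  calc ‖exp (-(z * τ)) - 1 - -(z * τ)‖
      ≤ ‖-(z * τ)‖ ^ 2 * Real.exp ‖-(z * τ)‖ :=
        Complex.norm_exp_sub_one_sub_id_le_sq_mul_exp _
    _ = τ * ‖z‖ ^ 2 * Real.exp (τ * ‖z‖) * τ := by rw [hnorm]; ring

lemma norm_le_of_mem_GammaTau {θ κ τ : ℝ} {z : ℂ} (hκ : κ ≤ π / (τ * Real.sin θ))
    (hz : z ∈ GammaTau θ κ τ) : ‖z‖ ≤ π / (τ * Real.sin θ) := by
  rcases hz with ⟨-, hray, -⟩ | ⟨harc, -⟩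
  · exact hray
  · exact harc ▸ hκ

theorem delta_minus_z_bound_general
    (θ : ℝ) :
    ∃ C > (0 : ℝ),
      ∀ τ : ℝ, 0 < τ → ∀ κ : ℝ, 0 < κ → κ ≤ Real.pi / (τ * Real.sin θ) →
      ∀ z ∈ GammaTau θ κ τ,
        ‖(1 - Complex.exp (-(z * τ))) / τ - z‖ ≤ C * τ * (‖z‖) ^ 2 := by
  refine ⟨Real.exp (π / Real.sin θ), Real.exp_pos _, fun τ hτ κ _ hκ z hz => ?_⟩
  -- `π / (τ sin θ) * τ = π / sin θ` holds even when `sin θ = 0`, both sides being junk `0`.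
  have hτz : τ * ‖z‖ ≤ π / Real.sin θ := by
    calc τ * ‖z‖ ≤ τ * (π / (τ * Real.sin θ)) :=
          mul_le_mul_of_nonneg_left (norm_le_of_mem_GammaTau hκ hz) hτ.le
      _ = π / Real.sin θ := by field_simp
  calc ‖(1 - Complex.exp (-(z * τ))) / τ - z‖
      ≤ τ * ‖z‖ ^ 2 * Real.exp (τ * ‖z‖) := norm_one_sub_exp_neg_mul_div_sub_le z hτ
    _ ≤ τ * ‖z‖ ^ 2 * Real.exp (π / Real.sin θ) := by gcongr
    _ = Real.exp (π / Real.sin θ) * τ * ‖z‖ ^ 2 := by ring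

/-- First-order error of the backward Euler symbol: `|δ_τ(e^{−zτ}) − z| ≤ Cτ|z|²`. -/
theorem delta_minus_z_bound
    (θ : ℝ) (hθ1 : Real.pi / 2 < θ) (hθ2 : θ < Real.pi)
    (hθ3 : Real.cos θ / Real.sin θ > -2 / Real.pi) :
    ∃ C > (0 : ℝ),
      ∀ τ : ℝ, 0 < τ → ∀ κ : ℝ, 0 < κ → κ ≤ Real.pi / (τ * Real.sin θ) →
      ∀ z ∈ GammaTau θ κ τ,
        ‖(1 - Complex.exp (-(z * τ))) / τ - z‖ ≤ C * τ * (‖z‖) ^ 2 :=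
  delta_minus_z_bound_general θ
end

section
/- Let θ ∈ (π/2, π) and b ∈ ℝ. Then there exists a constant C > 0, depending only on θ and b, such that for every t > 0 the weighted arc-length integral of |e^{zt}||z|^b over the contour Γ_{θ,1/t}, namely 2 ∫_{1/t}^{∞} e^{r t cos θ} r^b dr + t^{−(1+b)} ∫_{−θ}^{θ} e^{cos ψ} dψ, is finite and bounded by C t^{−(1+b)}. -/
open Real Set MeasureTheory intervalIntegral Filter Asymptotics

/-! Substituting `s = r t` on the rays turns their contribution into `t^{-(1+b)}` times the fixed
integral `∫_1^∞ e^{s cos θ} s^b ds`, which converges because `cos θ < 0` makes the exponential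
beat any power of `s`. The arc term already has the form `t^{-(1+b)} · const`. -/

lemma integrableOn_exp_mul_mul_rpow_Ioi {c : ℝ} (hc : c < 0) (a b : ℝ) (ha : 0 < a) :
    IntegrableOn (fun r : ℝ => exp (r * c) * r ^ b) (Ioi a) := by
  have hcont : ContinuousOn (fun r : ℝ => exp (r * c) * r ^ b) (Ici a) := by
    refine ((continuous_exp.comp (continuous_mul_const c)).continuousOn).mul
      (continuousOn_id.rpow_const fun r hr => Or.inl ?_)
    exact (ha.trans_le hr).ne'
  refine integrable_of_isBigO_exp_neg (b := -c / 2) (by linarith) hcont ?_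
  have hpow : (fun r : ℝ => r ^ b) =O[atTop] fun r => exp (-c / 2 * r) :=
    (isLittleO_rpow_exp_pos_mul_atTop b (by linarith)).isBigO
  refine ((isBigO_refl (fun r : ℝ => exp (r * c)) atTop).mul hpow).congr_right fun r => ?_
  rw [← exp_add]
  ring_nf

lemma integral_Ioi_comp_mul_mul_rpow (g : ℝ → ℝ) {a : ℝ} (ha : 0 ≤ a) (b : ℝ) {t : ℝ}
    (ht : 0 < t) :
    ∫ r in Ioi (a / t), g (t * r) * r ^ b = t ^ (-(1 + b)) * ∫ s in Ioi a, g s * s ^ b := by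
  have hsubst := integral_comp_mul_left_Ioi (fun s => g s * s ^ b) (a / t) ht
  rw [mul_div_cancel₀ a ht.ne', smul_eq_mul] at hsubst
  have hhom : ∫ r in Ioi (a / t), g (t * r) * (t * r) ^ b
      = t ^ b * ∫ r in Ioi (a / t), g (t * r) * r ^ b := by
    rw [← MeasureTheory.integral_const_mul]
    refine setIntegral_congr_fun measurableSet_Ioi fun r hr => ?_
    rw [mul_rpow ht.le ((div_nonneg ha ht.le).trans hr.le)]
    ring
  rw [hhom] at hsubst
  have htb : t ^ (-(1 + b)) = (t ^ b)⁻¹ * t⁻¹ := by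
    rw [neg_add, rpow_add ht, rpow_neg ht.le, rpow_neg ht.le, rpow_one, mul_comm]
  rw [htb, mul_assoc, ← hsubst, inv_mul_cancel_left₀ (rpow_pos_of_pos ht b).ne']

/-- The weighted arc-length integral of `|e^{zt}||z|^b` over the contour `Γ_{θ,1/t}`
(the two rays contribute `2∫_{1/t}^∞ e^{rt cos θ} r^b dr` and the arc contributes
`t^{−(1+b)} ∫_{−θ}^{θ} e^{cos ψ} dψ`) is finite and bounded by `C t^{−(1+b)}`. -/
theorem contour_weight_integral_bound
    (θ b : ℝ) (hθ1 : Real.pi / 2 < θ) (hθ2 : θ < Real.pi) :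
    ∃ C > (0 : ℝ), ∀ t : ℝ, 0 < t →
      IntegrableOn (fun r : ℝ => Real.exp (r * t * Real.cos θ) * r ^ b) (Set.Ici (1 / t)) ∧
      2 * (∫ r in Set.Ici (1 / t), Real.exp (r * t * Real.cos θ) * r ^ b) +
          t ^ (-(1 + b)) * (∫ ψ in (-θ)..θ, Real.exp (Real.cos ψ)) ≤
        C * t ^ (-(1 + b)) := by
  have hcos : cos θ < 0 := cos_neg_of_pi_div_two_lt_of_lt hθ1 (by linarith [pi_pos])
  set K := ∫ s in Ioi (1 : ℝ), exp (s * cos θ) * s ^ b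
  set I := ∫ ψ in (-θ)..θ, exp (cos ψ)
  have hK : 0 ≤ K := setIntegral_nonneg measurableSet_Ioi fun s hs =>
    mul_nonneg (exp_pos _).le (rpow_nonneg (zero_le_one.trans (le_of_lt hs)) b)
  have hI : 0 < I := intervalIntegral_pos_of_pos
    ((by fun_prop : Continuous fun ψ => exp (cos ψ)).intervalIntegrable _ _)
    (fun ψ => exp_pos _) (by linarith [pi_pos])
  refine ⟨2 * K + I, by positivity, fun t ht => ⟨?_, ?_⟩⟩
  · rw [integrableOn_Ici_iff_integrableOn_Ioi]
    simpa only [mul_assoc] using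
      integrableOn_exp_mul_mul_rpow_Ioi (mul_neg_of_pos_of_neg ht hcos) (1 / t) b (by positivity)
  · have hrays : ∫ r in Ici (1 / t), exp (r * t * cos θ) * r ^ b = t ^ (-(1 + b)) * K := by
      rw [integral_Ici_eq_integral_Ioi,
        ← integral_Ioi_comp_mul_mul_rpow (fun s => exp (s * cos θ)) zero_le_one b ht]
      simp only [mul_comm _ t]
    rw [hrays]
    linarith
end

section
/- Let H ∈ (1/2, 1) and t, u ≥ 0. Then H(2H−1) ∫₀ᵗ ∫₀ᵘ |s − r|^{2H−2} dr ds = (t^{2H} + u^{2H} − |t − u|^{2H})/2, where the (improper) double integral is finite. -/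
open Real Set MeasureTheory

/-! The kernel `|s - r| ^ p` (`p = 2H - 2 > -1`) has the odd power `|x| ^ p * x / (p + 1)` as a
primitive in `r`, and that in turn has `|x| ^ (p + 2) / (p + 2)` as a primitive. By Fubini the
integral over a rectangle is therefore the mixed second difference of
`|x - y| ^ (p + 2) / ((p + 1) * (p + 2))` at its corners; at the corners of `[0, t] × [0, u]`
this is the fBm covariance. -/

section AbsRpow

variable {p : ℝ}

lemma abs_abs_rpow_mul_self (hp : p ≠ -1) (x : ℝ) : |(|x| ^ p * x)| = |x| ^ (p + 1) := by
  rw [abs_mul, abs_of_nonneg (rpow_nonneg (abs_nonneg x) p),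
    rpow_add_one' (abs_nonneg x) (by contrapose! hp; linarith)]

lemma hasDerivAt_abs_rpow_mul_self (p : ℝ) {x : ℝ} (hx : x ≠ 0) :
    HasDerivAt (fun y => |y| ^ p * y) ((p + 1) * |x| ^ p) x := by
  have hx' : |x| ≠ 0 := abs_ne_zero.2 hx
  refine (((hasDerivAt_abs hx).rpow_const (p := p) (Or.inl hx')).mul
    (hasDerivAt_id x)).congr_deriv ?_
  rw [id, mul_one, mul_right_comm _ _ x, mul_right_comm _ _ x, sign_mul_self, rpow_sub_one hx']
  field_simp

lemma continuous_abs_rpow_mul_self (hp : -1 < p) : Continuous fun x : ℝ => |x| ^ p * x := by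
  refine continuous_iff_continuousAt.2 fun x => ?_
  rcases eq_or_ne x 0 with rfl | hx
  · rw [ContinuousAt, mul_zero, tendsto_zero_iff_norm_tendsto_zero]
    simp only [Real.norm_eq_abs, abs_abs_rpow_mul_self hp.ne']
    simpa [zero_rpow (by linarith : p + 1 ≠ 0)] using
      (continuous_abs.rpow_const fun _ => Or.inr (by linarith : 0 ≤ p + 1)).tendsto (0 : ℝ)
  · exact (hasDerivAt_abs_rpow_mul_self p hx).continuousAt

lemma intervalIntegrable_abs_rpow (hp : -1 < p) (a b : ℝ) :
    IntervalIntegrable (fun x => |x| ^ p) volume a b := by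
  have from_zero_of_nonneg (c : ℝ) (hc : 0 ≤ c) :
      IntervalIntegrable (fun x => |x| ^ p) volume 0 c :=
    (intervalIntegral.intervalIntegrable_rpow' hp).congr fun x hx => by
      rw [uIoc_of_le hc] at hx
      simp [abs_of_pos hx.1]
  have from_zero (c : ℝ) : IntervalIntegrable (fun x => |x| ^ p) volume 0 c := by
    rcases le_total 0 c with hc | hc
    · exact from_zero_of_nonneg c hc
    · simpa using (IntervalIntegrable.iff_comp_neg (by simp)).mp
        (from_zero_of_nonneg (-c) (neg_nonneg.2 hc))
  exact (from_zero a).symm.trans (from_zero b)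

lemma integral_abs_rpow (hp : -1 < p) (a b : ℝ) :
    ∫ x in a..b, |x| ^ p = (|b| ^ p * b - |a| ^ p * a) / (p + 1) := by
  have hp1 : p + 1 ≠ 0 := by linarith
  rw [sub_div]
  refine integral_eq_of_hasDerivAt_off_countable (fun x => |x| ^ p * x / (p + 1)) _
    (countable_singleton 0) ((continuous_abs_rpow_mul_self hp).div_const _).continuousOn
    (fun x hx => ?_) (intervalIntegrable_abs_rpow hp a b)
  refine ((hasDerivAt_abs_rpow_mul_self p hx.2).div_const (p + 1)).congr_deriv ?_
  field_simp

lemma integral_abs_rpow_mul_self (hp : -1 < p) (a b : ℝ) :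
    ∫ x in a..b, |x| ^ p * x = (|b| ^ (p + 2) - |a| ^ (p + 2)) / (p + 2) := by
  rw [sub_div]
  refine intervalIntegral.integral_eq_sub_of_hasDerivAt (f := fun x => |x| ^ (p + 2) / (p + 2))
    (fun x _ => ?_)
    ((continuous_abs_rpow_mul_self hp).intervalIntegrable a b)
  refine ((hasDerivAt_abs_rpow x (by linarith : 1 < p + 2)).div_const (p + 2)).congr_deriv ?_
  have hp2 : p + 2 ≠ 0 := by linarith
  rw [add_sub_cancel_right]
  field_simp

lemma intervalIntegrable_abs_sub_rpow (hp : -1 < p) (s c d : ℝ) :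
    IntervalIntegrable (fun r => |s - r| ^ p) volume c d := by
  simpa using (intervalIntegrable_abs_rpow hp (s - c) (s - d)).comp_sub_left s

lemma integral_abs_sub_rpow (hp : -1 < p) (s c d : ℝ) :
    ∫ r in c..d, |s - r| ^ p =
      (|s - c| ^ p * (s - c) - |s - d| ^ p * (s - d)) / (p + 1) := by
  rw [intervalIntegral.integral_comp_sub_left (fun x => |x| ^ p), integral_abs_rpow hp]

variable {a b c d : ℝ}

lemma integrableOn_abs_sub_rpow_prod (hp : -1 < p) (hcd : c ≤ d) :
    IntegrableOn (fun z : ℝ × ℝ => |z.1 - z.2| ^ p) (Ioc a b ×ˢ Ioc c d) := by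
  rw [IntegrableOn, Measure.volume_eq_prod, ← Measure.prod_restrict]
  refine (integrable_prod_iff
    (by fun_prop : Measurable fun z : ℝ × ℝ => |z.1 - z.2| ^ p).aestronglyMeasurable).2
    ⟨.of_forall fun s => ?_, ?_⟩
  · exact (intervalIntegrable_iff_integrableOn_Ioc_of_le hcd).mp
      (intervalIntegrable_abs_sub_rpow hp s c d)
  · simp only [Real.norm_of_nonneg (rpow_nonneg (abs_nonneg _) _),
      ← intervalIntegral.integral_of_le hcd, integral_abs_sub_rpow hp]
    have hg := continuous_abs_rpow_mul_self hp
    exact Continuous.integrableOn_Ioc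
      (((hg.comp (continuous_sub_right c)).sub (hg.comp (continuous_sub_right d))).div_const _)

lemma integral_abs_sub_rpow_prod (hp : -1 < p) (hab : a ≤ b) (hcd : c ≤ d) :
    ∫ z in Ioc a b ×ˢ Ioc c d, |z.1 - z.2| ^ p =
      (|b - c| ^ (p + 2) - |a - c| ^ (p + 2) - |b - d| ^ (p + 2) + |a - d| ^ (p + 2)) /
        ((p + 1) * (p + 2)) := by
  have hint := integrableOn_abs_sub_rpow_prod hp hcd (a := a) (b := b)
  rw [Measure.volume_eq_prod] at hint ⊢
  rw [setIntegral_prod _ hint]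
  simp only [← intervalIntegral.integral_of_le hab, ← intervalIntegral.integral_of_le hcd,
    integral_abs_sub_rpow hp]
  have hg (e : ℝ) : IntervalIntegrable (fun x => |x - e| ^ p * (x - e)) volume a b :=
    ((continuous_abs_rpow_mul_self hp).comp (continuous_sub_right e)).intervalIntegrable a b
  rw [intervalIntegral.integral_div, intervalIntegral.integral_sub (hg c) (hg d),
    intervalIntegral.integral_comp_sub_right (fun x => |x| ^ p * x),
    intervalIntegral.integral_comp_sub_right (fun x => |x| ^ p * x),
    integral_abs_rpow_mul_self hp, integral_abs_rpow_mul_self hp]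
  have : p + 1 ≠ 0 := by linarith
  have : p + 2 ≠ 0 := by linarith
  field_simp
  ring

end AbsRpow

theorem fbm_covariance_kernel_integral_general
    (H : ℝ) (hH1 : 1 / 2 < H)
    (t u : ℝ) (ht : 0 ≤ t) (hu : 0 ≤ u) :
    IntegrableOn (fun p : ℝ × ℝ => |p.1 - p.2| ^ (2 * H - 2))
      ((Set.Ioc 0 t) ×ˢ (Set.Ioc 0 u)) ∧
    H * (2 * H - 1) *
        ∫ p in (Set.Ioc 0 t) ×ˢ (Set.Ioc 0 u), |p.1 - p.2| ^ (2 * H - 2) =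
      (t ^ (2 * H) + u ^ (2 * H) - |t - u| ^ (2 * H)) / 2 := by
  have hp : -1 < 2 * H - 2 := by linarith
  refine ⟨integrableOn_abs_sub_rpow_prod hp hu, ?_⟩
  rw [integral_abs_sub_rpow_prod hp ht hu, show 2 * H - 2 + 2 = 2 * H by ring,
    show 2 * H - 2 + 1 = 2 * H - 1 by ring]
  have h2H : 2 * H ≠ 0 := by linarith
  simp only [sub_zero, zero_sub, abs_neg, abs_zero, abs_of_nonneg ht, abs_of_nonneg hu,
    zero_rpow h2H]
  field_simp
  rw [mul_div_cancel_left₀ _ (by linarith)]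
  ring

/-- The fBm covariance identity: for `H ∈ (1/2,1)`,
`H(2H−1) ∫₀ᵗ∫₀ᵘ |s−r|^{2H−2} dr ds = (t^{2H} + u^{2H} − |t−u|^{2H})/2`,
the double integral being finite. -/
theorem fbm_covariance_kernel_integral
    (H : ℝ) (hH1 : 1 / 2 < H) (hH2 : H < 1)
    (t u : ℝ) (ht : 0 ≤ t) (hu : 0 ≤ u) :
    IntegrableOn (fun p : ℝ × ℝ => |p.1 - p.2| ^ (2 * H - 2))
      ((Set.Ioc 0 t) ×ˢ (Set.Ioc 0 u)) ∧
    H * (2 * H - 1) *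
        ∫ p in (Set.Ioc 0 t) ×ˢ (Set.Ioc 0 u), |p.1 - p.2| ^ (2 * H - 2) =
      (t ^ (2 * H) + u ^ (2 * H) - |t - u| ^ (2 * H)) / 2 :=
  fbm_covariance_kernel_integral_general H hH1 t u ht hu
end

section
/- Let α ∈ (0, 1), β ∈ [0, 1], and θ ∈ (π/2, π). Then there exists a constant C > 0, depending only on α, β, θ, such that for every z ∈ ℂ with z ≠ 0 and |arg z| ≤ θ, and every real λ > 0: z^α + λ ≠ 0 and λ^β |z^α + λ|^{−1} ≤ C |z|^{(β−1)α}, where z^α is the principal-branch complex power. -/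
open Real Complex Set

/-!
If `|arg w| ≤ φ < π` and `t ≥ 0`, the law of cosines gives
`‖w + t‖² - cos²(φ/2) (‖w‖ + t)² ≥ (1 - cos φ) (‖w‖ - t)² / 2 ≥ 0`, so `w + t` stays a fixed
proportion `cos (φ/2)` of `‖w‖ + t` away from `0`. For `w = z ^ α` one may take `φ = α θ < π`.
Finally `λ ^ β ≤ (r + λ) ^ β` and `(r + λ) ^ (β - 1) ≤ r ^ (β - 1)` for `r = ‖z‖ ^ α`.
-/

theorem cos_half_mul_add_le_norm_add_ofReal {w : ℂ} {φ t : ℝ}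
    (hw : ‖w‖ * Real.cos φ ≤ w.re) (ht : 0 ≤ t) :
    Real.cos (φ / 2) * (‖w‖ + t) ≤ ‖w + t‖ := by
  have hsq : ‖w + t‖ ^ 2 = ‖w‖ ^ 2 + 2 * t * w.re + t ^ 2 := by
    rw [Complex.sq_norm, Complex.normSq_add, ← Complex.sq_norm, Complex.normSq_ofReal]
    simp only [Complex.conj_ofReal, Complex.mul_re, Complex.ofReal_re, Complex.ofReal_im]
    ring
  have hhalf : Real.cos (φ / 2) ^ 2 = (1 + Real.cos φ) / 2 := by
    rw [Real.cos_sq, mul_div_cancel₀ _ two_ne_zero]; ring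
  refine le_of_sq_le_sq ?_ (norm_nonneg _)
  rw [hsq, mul_pow, hhalf]
  nlinarith [mul_le_mul_of_nonneg_left hw (by positivity : 0 ≤ 2 * t),
    mul_nonneg (sub_nonneg.2 (Real.cos_le_one φ)) (sq_nonneg (‖w‖ - t))]

theorem norm_mul_cos_le_re_cpow {z : ℂ} {α θ : ℝ} (hα : 0 ≤ α) (hz : |z.arg| ≤ θ)
    (hαθ : α * θ ≤ π) :
    ‖z ^ (α : ℂ)‖ * Real.cos (α * θ) ≤ (z ^ (α : ℂ)).re := by
  rw [cpow_ofReal_re, norm_cpow_real, ← Real.cos_abs (z.arg * α), abs_mul, abs_of_nonneg hα]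
  gcongr
  exact Real.cos_le_cos_of_nonneg_of_le_pi (by positivity) hαθ (by rw [mul_comm]; gcongr)

theorem rpow_mul_inv_add_le {r t β : ℝ} (hr : 0 < r) (ht : 0 ≤ t) (hβ : β ∈ Icc 0 1) :
    t ^ β * (r + t)⁻¹ ≤ r ^ (β - 1) := by
  have hrt : 0 < r + t := by linarith
  calc t ^ β * (r + t)⁻¹ ≤ (r + t) ^ β * (r + t)⁻¹ :=
        mul_le_mul_of_nonneg_right (Real.rpow_le_rpow ht (by linarith) hβ.1) (by positivity)
    _ = (r + t) ^ (β - 1) := by rw [Real.rpow_sub_one hrt.ne', div_eq_mul_inv]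
    _ ≤ r ^ (β - 1) := Real.rpow_le_rpow_of_nonpos hr (by linarith) (by linarith [hβ.2])

/-- Scalar resolvent estimate: for `α ∈ (0,1)`, `β ∈ [0,1]`, `θ ∈ (π/2, π)`, there is
`C > 0` such that for all `z` in the sector `Σ_θ` and all `λ > 0`, `z^α + λ ≠ 0` and
`λ^β |z^α + λ|⁻¹ ≤ C |z|^{(β−1)α}`. -/
theorem scalar_resolvent_estimate
    (α β θ : ℝ) (hα0 : 0 < α) (hα1 : α < 1) (hβ : β ∈ Set.Icc (0 : ℝ) 1)
    (hθ1 : Real.pi / 2 < θ) (hθ2 : θ < Real.pi) :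
    ∃ C > (0 : ℝ), ∀ z : ℂ, z ≠ 0 → |z.arg| ≤ θ → ∀ lam : ℝ, 0 < lam →
      z ^ (α : ℂ) + (lam : ℂ) ≠ 0 ∧
      lam ^ β * (‖z ^ (α : ℂ) + (lam : ℂ)‖)⁻¹ ≤
        C * (‖z‖) ^ ((β - 1) * α) := by
  have hαθ : α * θ < π := by nlinarith [pi_pos]
  have hc : 0 < Real.cos (α * θ / 2) :=
    Real.cos_pos_of_mem_Ioo ⟨by nlinarith [pi_pos], by linarith⟩
  refine ⟨(Real.cos (α * θ / 2))⁻¹, inv_pos.2 hc, fun z hz harg lam hlam => ?_⟩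
  have hnorm : ‖z ^ (α : ℂ)‖ = ‖z‖ ^ α := norm_cpow_real z α
  have hr : 0 < ‖z ^ (α : ℂ)‖ := hnorm ▸ Real.rpow_pos_of_pos (norm_pos_iff.2 hz) α
  have hlow := cos_half_mul_add_le_norm_add_ofReal
    (norm_mul_cos_le_re_cpow hα0.le harg hαθ.le) hlam.le
  have hpos : 0 < ‖z ^ (α : ℂ) + lam‖ := lt_of_lt_of_le (by positivity) hlow
  refine ⟨norm_pos_iff.1 hpos, ?_⟩
  calc lam ^ β * ‖z ^ (α : ℂ) + lam‖⁻¹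
      ≤ lam ^ β * (Real.cos (α * θ / 2) * (‖z ^ (α : ℂ)‖ + lam))⁻¹ := by gcongr
    _ = (Real.cos (α * θ / 2))⁻¹ * (lam ^ β * (‖z ^ (α : ℂ)‖ + lam)⁻¹) := by
        rw [mul_inv]; ring
    _ ≤ (Real.cos (α * θ / 2))⁻¹ * ‖z ^ (α : ℂ)‖ ^ (β - 1) := by
        gcongr; exact rpow_mul_inv_add_le hr hlam.le hβ
    _ = (Real.cos (α * θ / 2))⁻¹ * ‖z‖ ^ ((β - 1) * α) := by
        rw [hnorm, ← Real.rpow_mul (norm_nonneg z), mul_comm α (β - 1)]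
end
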